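/- arXiv:0807.0502 — 3 statements merged into one kernel-verified Lean document; each statement's English description precedes it below -/
import Mathlib

section
/- Let D ≡ 1 (mod 4) be a negative fundamental discriminant with D ≡ r² (mod 4N). The map f(xN + y(r+√D)/2) = [[x, -y/N],[-rx - y(r²-D)/4N, -x]] is an isometry from the ideal 𝔫 = [N, (r+√D)/2] with quadratic form Q(z) = -Norm(z)/N onto the lattice 𝒩 = ℤ·[[1,0],[-r,-1]] ⊕ ℤ·[[0,1/N],[(r²-D)/4N,0]] with quadratic form Q(A) = N·det(A). -/
open Matrix Complex

noncomputable def Qform (N : ℕ) (x : Matrix (Fin 2) (Fin 2) ℚ) : ℚ := N * x.det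

/-- The map `f(xN + y(r+√D)/2) = [[x, -y/N],[-rx - y(r²-D)/4N, -x]]`. -/
noncomputable def Fmap (N : ℕ) (D r : ℤ) (p : ℤ × ℤ) : Matrix (Fin 2) (Fin 2) ℚ :=
  !![(p.1 : ℚ), -(p.2 : ℚ)/(N:ℚ);
     -(r : ℚ)*(p.1 : ℚ) - (p.2 : ℚ)*((r : ℚ)^2 - (D : ℚ))/(4*N), -(p.1 : ℚ)]

/-- `f` is an isometry from the ideal `𝔫 = [N, (r+√D)/2]` with `Q(z) = -Norm(z)/N`
onto the lattice `𝒩 = ℤ·[[1,0],[-r,-1]] ⊕ ℤ·[[0,1/N],[(r²-D)/4N,0]]` with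
`Q(A) = N·det(A)`: it is additive, preserves the quadratic forms, and is a
bijection onto `𝒩`. -/
theorem stmt6 (N : ℕ) (hN : 0 < N) (D r : ℤ) (hD : D < 0)
    (hDmod : D % 4 = 1) (hDfund : Squarefree D)
    (hcong : (4*(N:ℤ)) ∣ r^2 - D) :
    (∀ p q : ℤ × ℤ, Fmap N D r (p + q) = Fmap N D r p + Fmap N D r q) ∧
    (∀ x y : ℤ,
      ((Qform N (Fmap N D r (x, y)) : ℚ) : ℝ)
        = -(Complex.normSq ((x : ℂ) * (N : ℂ)
            + (y : ℂ) * (((r : ℂ) + Complex.I * Real.sqrt ((-D : ℤ) : ℝ))/2))) / (N : ℝ)) ∧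
    Set.BijOn (Fmap N D r) Set.univ
      {A : Matrix (Fin 2) (Fin 2) ℚ | ∃ a b : ℤ,
        A = (a : ℚ) • (!![(1 : ℚ), 0; -(r : ℚ), -1])
          + (b : ℚ) • (!![(0 : ℚ), 1/(N:ℚ); ((r : ℚ)^2 - (D : ℚ))/(4*N), 0])} := by
  have hNQ : (N : ℚ) ≠ 0 := Nat.cast_ne_zero.mpr hN.ne'
  have hNR : (N : ℝ) ≠ 0 := Nat.cast_ne_zero.mpr hN.ne'
  refine ⟨?_, ?_, ?_, ?_, ?_⟩
  · intro p q
    ext i j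
    fin_cases i <;> fin_cases j <;>
      simp [Fmap, Matrix.add_apply] <;> push_cast <;> ring
  · intro x y
    have hD0 : (0:ℝ) ≤ ((-D : ℤ) : ℝ) := by
      have : (0:ℤ) ≤ -D := by omega
      exact_mod_cast this
    have hsq : (Real.sqrt ((-D:ℤ):ℝ))^2 = ((-D:ℤ):ℝ) := Real.sq_sqrt hD0
    set s : ℝ := Real.sqrt ((-D:ℤ):ℝ) with hs
    simp only [Qform, Fmap, Matrix.det_fin_two_of, Complex.normSq_apply]
    push_cast [hsq]
    simp [Complex.add_re, Complex.add_im, Complex.mul_re, Complex.mul_im,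
      Complex.div_re, Complex.div_im, Complex.I_re, Complex.I_im,
      Complex.ofReal_re, Complex.ofReal_im, Complex.normSq]
    have hsq' : s^2 = -(D:ℝ) := by rw [hsq]; push_cast; ring
    field_simp
    linear_combination (4*(y:ℝ)^2) * hsq'
  · intro p _
    exact ⟨p.1, -p.2, by ext i j; fin_cases i <;> fin_cases j <;>
      simp [Fmap, Matrix.add_apply] <;> push_cast <;> ring⟩
  · intro p _ q _ h
    have h00 := congrFun (congrFun h 0) 0
    have h01 := congrFun (congrFun h 0) 1
    simp [Fmap] at h00 h01
    have h1 : p.1 = q.1 := by exact_mod_cast h00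
    have h2 : p.2 = q.2 := by
      field_simp at h01
      have : p.2 = q.2 ∨ N = 0 := Or.inl (neg_inj.mp (by exact_mod_cast h01))
      rcases this with h | h
      · exact h
      · omega
    exact Prod.ext h1 h2
  · rintro A ⟨a, b, rfl⟩
    refine ⟨(a, -b), trivial, ?_⟩
    ext i j
    fin_cases i <;> fin_cases j <;>
      simp [Fmap, Matrix.add_apply] <;> push_cast <;> ring
end

section
/- Let D < 0 be a fundamental discriminant with (D, 2Δ) = 1 and Δ ≡ 1 (mod 4) prime. In the space V = {[[a,λ],[λ',b]] : a,b ∈ ℚ, λ ∈ F} over F = ℚ(√Δ) with Q = det, the plane U = ℚf₁ ⊕ ℚf₂ with f₁ = [[0,1],[1,D]], f₂ = [[2,D],[D,(D²+D)/2]] is negative definite, and the lattice N = U ∩ (V ∩ M₂(O_F)) with basis f₁, f₂ is isometric to (O_D, -Norm) via f₁ ↦ 1, f₂ ↦ √D. -/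
open Matrix

/-- In `V = {[[a,λ],[σλ,b]]} ⊂ M₂(F)`, `F = ℚ(√Δ)`, with `Q = det`: the plane
`U = ℚf₁ ⊕ ℚf₂`, `f₁ = [[0,1],[1,D]]`, `f₂ = [[2,D],[D,(D²+D)/2]]` is negative
definite, and the lattice `N = ℤf₁ ⊕ ℤf₂` is isometric to `(O_D, -Norm)` via
`f₁ ↦ 1`, `f₂ ↦ √D`, i.e. `Q(x f₁ + y f₂) = -(x² - D y²) = -Norm(x + y√D)`. -/
theorem stmt15 (Δ : ℤ) (hΔpos : 0 < Δ) (hΔprime : Prime Δ) (hΔmod : Δ % 4 = 1)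
    (D : ℤ) (hD : D < 0) (hDfund : Squarefree D) (hcop : IsCoprime D (2*Δ))
    (F : Type*) [Field F] [Algebra ℚ F] (σ : F →+* F)
    (hσσ : ∀ x : F, σ (σ x) = x)
    (hfix : ∀ x : F, σ x = x ↔ ∃ q : ℚ, x = algebraMap ℚ F q)
    (sqrtΔ : F) (hsqrt : sqrtΔ ^ 2 = (Δ : F)) (hσsqrt : σ sqrtΔ = -sqrtΔ) :
    let f₁ : Matrix (Fin 2) (Fin 2) F := !![(0 : F), 1; 1, (D : F)]
    let f₂ : Matrix (Fin 2) (Fin 2) F :=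
      !![(2 : F), (D : F); (D : F), ((D : F)^2 + (D : F))/2]
    (f₁.map σ = f₁ᵀ ∧ f₂.map σ = f₂ᵀ) ∧
    (∀ x y : ℚ, (x • f₁ + y • f₂).det = algebraMap ℚ F ((D : ℚ)*y^2 - x^2)) ∧
    (∀ x y : ℚ, ¬(x = 0 ∧ y = 0) → (D : ℚ)*y^2 - x^2 < 0) := by
  intro f₁ f₂
  haveI : CharZero F := charZero_of_injective_algebraMap (algebraMap ℚ F).injective
  have halg : ∀ q : ℚ, algebraMap ℚ F q = (q : F) := fun q =>
    eq_ratCast (algebraMap ℚ F) q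
  have hσD : σ (D : F) = (D : F) := (hfix _).mpr ⟨(D:ℚ), by rw [halg]; push_cast; ring⟩
  have hσ2 : σ (2 : F) = (2 : F) := (hfix _).mpr ⟨2, by rw [halg]; push_cast; ring⟩
  have hσd : σ (((D : F)^2 + (D : F))/2) = ((D : F)^2 + (D : F))/2 :=
    (hfix _).mpr ⟨((D:ℚ)^2 + D)/2, by rw [halg]; push_cast; ring⟩
  refine ⟨⟨?_, ?_⟩, ?_, ?_⟩
  · ext i j
    fin_cases i <;> fin_cases j <;>
      simp [f₁, Matrix.map_apply, hσD]
  · ext i j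
    fin_cases i <;> fin_cases j <;>
      simp [f₂, Matrix.map_apply, hσD, hσ2, hσd]
  · intro x y
    rw [halg, Matrix.det_fin_two]
    simp only [f₁, f₂, Matrix.add_apply, Matrix.smul_apply, Matrix.of_apply,
      Matrix.cons_val', Matrix.cons_val_zero, Matrix.cons_val_one,
      Matrix.head_cons, Matrix.empty_val', Matrix.cons_val_fin_one,
      Matrix.head_fin_const]
    simp only [Algebra.smul_def, halg, smul_eq_mul]
    have h2 : (2 : F) ≠ 0 := two_ne_zero
    push_cast
    ring
  · intro x y hxy
    rcases eq_or_ne y 0 with hy | hy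
    · have hx : x ≠ 0 := fun hx => hxy ⟨hx, hy⟩
      have : (0:ℚ) < x^2 := by positivity
      subst hy
      nlinarith
    · have hDq : (D:ℚ) < 0 := by exact_mod_cast hD
      have : (0:ℚ) < y^2 := by positivity
      nlinarith [sq_nonneg x]
end

section
/- With F = ℚ(√Δ), V as above, and e₁ = [[0,√Δ],[-√Δ,0]], e₂ = [[1,(D+√Δ)/2],[(D-√Δ)/2,(D²-D)/4]]: one has Q(e₁) = Δ, Q(e₂) = (D² - D)/4 - (D² - Δ)/4 = (Δ - D)/4, the vectors e₁, e₂ are orthogonal to both f₁ = [[0,1],[1,D]] and f₂ = [[2,D],[D,(D²+D)/2]] with respect to the bilinear form of Q = det, and Q is positive definite on ℚe₁ + ℚe₂. -/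
open Matrix

/-- With `F = ℚ(√Δ)`, `V` as above and `Q = det`:
`e₁ = [[0,√Δ],[-√Δ,0]]` and `e₂ = [[1,(D+√Δ)/2],[(D-√Δ)/2,(D²-D)/4]]` satisfy
`Q(e₁) = Δ`, `Q(e₂) = (D²-D)/4 - (D²-Δ)/4 = (Δ-D)/4`, are orthogonal to
`f₁ = [[0,1],[1,D]]` and `f₂ = [[2,D],[D,(D²+D)/2]]` for the bilinear form of
`Q`, and `Q` is positive definite on `ℚe₁ + ℚe₂`. -/
theorem stmt16 (Δ : ℤ) (hΔpos : 0 < Δ) (hΔprime : Prime Δ) (hΔmod : Δ % 4 = 1)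
    (D : ℤ) (hD : D < 0) (hDfund : Squarefree D) (hcop : IsCoprime D (2*Δ))
    (F : Type*) [Field F] [Algebra ℚ F] (σ : F →+* F)
    (hσσ : ∀ x : F, σ (σ x) = x)
    (hfix : ∀ x : F, σ x = x ↔ ∃ q : ℚ, x = algebraMap ℚ F q)
    (sqrtΔ : F) (hsqrt : sqrtΔ ^ 2 = (Δ : F)) (hσsqrt : σ sqrtΔ = -sqrtΔ) :
    let e₁ : Matrix (Fin 2) (Fin 2) F := !![(0 : F), sqrtΔ; -sqrtΔ, 0]
    let e₂ : Matrix (Fin 2) (Fin 2) F :=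
      !![(1 : F), ((D : F) + sqrtΔ)/2; ((D : F) - sqrtΔ)/2, ((D : F)^2 - (D : F))/4]
    let f₁ : Matrix (Fin 2) (Fin 2) F := !![(0 : F), 1; 1, (D : F)]
    let f₂ : Matrix (Fin 2) (Fin 2) F :=
      !![(2 : F), (D : F); (D : F), ((D : F)^2 + (D : F))/2]
    e₁.det = (Δ : F) ∧
    e₂.det = ((D : F)^2 - (D : F))/4 - ((D : F)^2 - (Δ : F))/4 ∧
    e₂.det = ((Δ : F) - (D : F))/4 ∧
    ((e₁ + f₁).det - e₁.det - f₁.det = 0) ∧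
    ((e₁ + f₂).det - e₁.det - f₂.det = 0) ∧
    ((e₂ + f₁).det - e₂.det - f₁.det = 0) ∧
    ((e₂ + f₂).det - e₂.det - f₂.det = 0) ∧
    (∀ x y : ℚ, ¬(x = 0 ∧ y = 0) →
      ∃ q : ℚ, (x • e₁ + y • e₂).det = algebraMap ℚ F q ∧ 0 < q) := by
  haveI : CharZero F := charZero_of_injective_algebraMap (algebraMap ℚ F).injective
  intro e₁ e₂ f₁ f₂
  have hΔq : (1:ℚ) ≤ (Δ:ℚ) := by exact_mod_cast hΔpos
  have hD1 : D ≤ -1 := by omega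
  have hDq : (D:ℚ) ≤ -1 := by exact_mod_cast hD1
  refine ⟨?_, ?_, ?_, ?_, ?_, ?_, ?_, ?_⟩
  · simp [e₁, Matrix.det_fin_two_of]
    linear_combination hsqrt
  · simp [e₂, Matrix.det_fin_two_of]
    linear_combination (-(1:F)/4) * hsqrt
  · simp [e₂, Matrix.det_fin_two_of]
    linear_combination ((1:F)/4) * hsqrt
  · simp [e₁, f₁, Matrix.det_fin_two_of, Matrix.add_apply]
    ring
  · simp [e₁, f₂, Matrix.det_fin_two_of, Matrix.add_apply]
    ring
  · simp [e₂, f₁, Matrix.det_fin_two_of, Matrix.add_apply]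
    ring
  · simp [e₂, f₂, Matrix.det_fin_two_of, Matrix.add_apply]
    ring
  · intro x y hxy
    refine ⟨(Δ:ℚ)*x^2 + (Δ:ℚ)*x*y + ((Δ:ℚ)-(D:ℚ))/4*y^2, ?_, ?_⟩
    · have h : algebraMap ℚ F ((Δ:ℚ)*x^2 + (Δ:ℚ)*x*y + ((Δ:ℚ)-(D:ℚ))/4*y^2)
          = (Δ:F)*(x:F)^2 + (Δ:F)*(x:F)*(y:F) + ((Δ:F)-(D:F))/4*(y:F)^2 := by
        simp [map_add, _root_.map_mul, map_pow, map_div₀, map_sub, map_intCast, map_ofNat]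
      rw [h]
      simp only [Matrix.det_fin_two, Matrix.add_apply, Matrix.smul_apply, e₁, e₂,
        Matrix.cons_val', Matrix.cons_val_zero, Matrix.cons_val_one, Matrix.head_cons,
        Matrix.empty_val', Matrix.cons_val_fin_one, Matrix.of_apply, Matrix.head_fin_const]
      simp only [Algebra.smul_def, eq_ratCast]
      linear_combination ((x:F)^2 + (x:F)*(y:F) + (y:F)^2/4) * hsqrt
    · rcases eq_or_ne y 0 with hy | hy
      · have hx : x ≠ 0 := fun hx => hxy ⟨hx, hy⟩
        have hx2 : 0 < x^2 := by positivity
        subst hy; nlinarith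
      · have hy2 : 0 < y^2 := by positivity
        nlinarith [sq_nonneg (x + y/2), mul_nonneg (le_of_lt (lt_of_lt_of_le zero_lt_one hΔq)) (sq_nonneg (x + y/2))]
end
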